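/- Consider the linear ODE system ẋ = Ax − BBᵀp, ṗ = −CᵀCx − Aᵀp on ℝ²ⁿ, i.e., ż = Ham·z with Ham = [[A, −BBᵀ],[−CᵀC, −Aᵀ]]. If (A,B) is stabilizable and (C,A) is detectable, then Ham has no eigenvalues on the imaginary axis. -/

import Mathlib

/-!
Write an eigenvector of the Hamiltonian matrix as `z = (x, p)`. Pairing the first block equation
with `p`, the second with `x`, and adding the complex conjugate of the first to the second gives
`‖Nᴴ p‖² + ‖K x‖² = -2 Re(λ) ⟪x, p⟫`. On the imaginary axis the right side vanishes, so
`Nᴴ p = 0` and `K x = 0`; the block equations then decouple into `M x = λ x` and `Mᴴ p = -λ p`,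
and whichever of `x`, `p` is nonzero violates the corresponding Hautus condition.
-/

open Matrix Complex
open scoped ComplexOrder

namespace Matrix

variable {ι κ μ : Type*} [Fintype ι] [Fintype κ] [Fintype μ]

theorem star_dotProduct_mul_conjTranspose_mulVec (N : Matrix ι κ ℂ) (p : ι → ℂ) :
    star p ⬝ᵥ (N * Nᴴ) *ᵥ p = star (Nᴴ *ᵥ p) ⬝ᵥ (Nᴴ *ᵥ p) := by
  rw [star_mulVec, conjTranspose_conjTranspose, ← dotProduct_mulVec, mulVec_mulVec]

theorem star_star_dotProduct_mulVec (M : Matrix ι ι ℂ) (x p : ι → ℂ) :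
    star (star p ⬝ᵥ M *ᵥ x) = star x ⬝ᵥ Mᴴ *ᵥ p := by
  rw [star_dotProduct x, star_mulVec, conjTranspose_conjTranspose, dotProduct_mulVec]

theorem conjTranspose_mulVec_eq_zero_and_mulVec_eq_zero_of_hamiltonian
    (M : Matrix ι ι ℂ) (N : Matrix ι κ ℂ) (K : Matrix μ ι ℂ) {x p : ι → ℂ} {lam : ℂ}
    (hre : lam.re = 0) (hx : M *ᵥ x - (N * Nᴴ) *ᵥ p = lam • x)
    (hp : -((Kᴴ * K) *ᵥ x) - Mᴴ *ᵥ p = lam • p) :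
    Nᴴ *ᵥ p = 0 ∧ K *ᵥ x = 0 := by
  set u := Nᴴ *ᵥ p
  set v := K *ᵥ x
  have hpx : star p ⬝ᵥ M *ᵥ x - star u ⬝ᵥ u = lam * (star p ⬝ᵥ x) := by
    rw [← star_dotProduct_mul_conjTranspose_mulVec, ← dotProduct_sub, hx, dotProduct_smul,
      smul_eq_mul]
  have hxp : -(star v ⬝ᵥ v) - star x ⬝ᵥ Mᴴ *ᵥ p = lam * (star x ⬝ᵥ p) := by
    have := star_dotProduct_mul_conjTranspose_mulVec Kᴴ x
    rw [conjTranspose_conjTranspose] at this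
    rw [← this, ← dotProduct_neg, ← dotProduct_sub, hp, dotProduct_smul, smul_eq_mul]
  have hpx' : star x ⬝ᵥ Mᴴ *ᵥ p - star u ⬝ᵥ u = star lam * (star x ⬝ᵥ p) := by
    have := congrArg star hpx
    rwa [star_sub, star_mul', star_star_dotProduct_mulVec,
      (IsSelfAdjoint.of_nonneg (dotProduct_star_self_nonneg u)).star_eq, ← star_dotProduct] at this
  have hconj : lam + star lam = 0 := by
    rw [Complex.star_def, add_conj, hre, mul_zero, ofReal_zero]
  have hsum : star u ⬝ᵥ u + star v ⬝ᵥ v = 0 := by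
    linear_combination (-(star x ⬝ᵥ p)) * hconj - hxp - hpx'
  rwa [add_eq_zero_iff_of_nonneg (dotProduct_star_self_nonneg u)
    (dotProduct_star_self_nonneg v), dotProduct_star_self_eq_zero,
    dotProduct_star_self_eq_zero] at hsum

theorem re_ne_zero_of_hamiltonian_mulVec_eq_smul
    (M : Matrix ι ι ℂ) (N : Matrix ι κ ℂ) (K : Matrix μ ι ℂ)
    (hstab : ∀ (lam : ℂ) (w : ι → ℂ), w ≠ 0 → lam.re = 0 → Mᴴ *ᵥ w = lam • w → Nᴴ *ᵥ w ≠ 0)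
    (hdet : ∀ (lam : ℂ) (v : ι → ℂ), v ≠ 0 → lam.re = 0 → M *ᵥ v = lam • v → K *ᵥ v ≠ 0)
    {lam : ℂ} {z : ι ⊕ ι → ℂ} (hz : z ≠ 0)
    (heig : fromBlocks M (-(N * Nᴴ)) (-(Kᴴ * K)) (-Mᴴ) *ᵥ z = lam • z) :
    lam.re ≠ 0 := by
  intro hre
  rw [fromBlocks_mulVec] at heig
  set x := z ∘ Sum.inl
  set p := z ∘ Sum.inr
  have hx : M *ᵥ x - (N * Nᴴ) *ᵥ p = lam • x := by
    ext i; simpa [neg_mulVec, sub_eq_add_neg, x] using congrFun heig (Sum.inl i)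
  have hp : -((Kᴴ * K) *ᵥ x) - Mᴴ *ᵥ p = lam • p := by
    ext i; simpa [neg_mulVec, sub_eq_add_neg, p] using congrFun heig (Sum.inr i)
  obtain ⟨hNp, hKx⟩ :=
    conjTranspose_mulVec_eq_zero_and_mulVec_eq_zero_of_hamiltonian M N K hre hx hp
  by_cases hx0 : x = 0
  · have hp0 : p ≠ 0 := fun hp0 => hz (funext (Sum.rec (congrFun hx0) (congrFun hp0)))
    refine hstab (-lam) p hp0 (by simp [hre]) ?_ hNp
    rw [← mulVec_mulVec, hKx, mulVec_zero, neg_zero, zero_sub, neg_eq_iff_eq_neg] at hp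
    rw [hp, neg_smul]
  · refine hdet lam x hx0 hre ?_ hKx
    rwa [← mulVec_mulVec, hNp, mulVec_zero, sub_zero] at hx

theorem conjTranspose_map_ofReal {m n : Type*} (A : Matrix m n ℝ) :
    (A.map ofReal)ᴴ = Aᵀ.map ofReal := by
  ext; simp

theorem map_ofReal_mul {l m n : Type*} [Fintype m] (L : Matrix l m ℝ) (M : Matrix m n ℝ) :
    (L * M).map ofReal = L.map ofReal * M.map ofReal :=
  Matrix.map_mul (f := ofRealHom)

end Matrix

/-- If `(A,B)` is stabilizable and `(C,A)` is detectable (Hautus conditions), then the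
Hamiltonian matrix `Ham = [[A, -BBᵀ],[-CᵀC, -Aᵀ]]` has no eigenvalues on the imaginary
axis. -/
theorem stmt_13 {n m r : ℕ} (A : Matrix (Fin n) (Fin n) ℝ)
    (B : Matrix (Fin n) (Fin m) ℝ) (C : Matrix (Fin r) (Fin n) ℝ)
    (hstab : ∀ (lam : ℂ) (w : Fin n → ℂ), w ≠ 0 → 0 ≤ lam.re →
      (Aᵀ.map (Complex.ofReal)).mulVec w = lam • w →
      (Bᵀ.map (Complex.ofReal)).mulVec w ≠ 0)
    (hdet : ∀ (lam : ℂ) (v : Fin n → ℂ), v ≠ 0 → 0 ≤ lam.re →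
      (A.map (Complex.ofReal)).mulVec v = lam • v →
      (C.map (Complex.ofReal)).mulVec v ≠ 0) :
    ∀ (lam : ℂ) (z : (Fin n ⊕ Fin n) → ℂ), z ≠ 0 →
      ((Matrix.fromBlocks A (-(B * Bᵀ)) (-(Cᵀ * C)) (-Aᵀ)).map
        (Complex.ofReal)).mulVec z = lam • z →
      lam.re ≠ 0 := by
  intro lam z hz heig
  simp only [fromBlocks_map, Matrix.map_neg _ ofReal_neg, map_ofReal_mul,
    ← conjTranspose_map_ofReal] at heig
  refine re_ne_zero_of_hamiltonian_mulVec_eq_smul (A.map ofReal) (B.map ofReal) (C.map ofReal)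
    ?_ ?_ hz heig
  · intro lam w hw hre
    simpa only [conjTranspose_map_ofReal] using hstab lam w hw hre.ge
  · exact fun lam v hv hre => hdet lam v hv hre.ge
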